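/- arXiv:1701.02927 — 2 statements merged into one kernel-verified Lean document; each statement's English description precedes it below -/
import Mathlib

section
/- For every language L over a finite alphabet Σ, the upward closure of L (the set of words having a subword in L) is a regular language. -/
/-!
By Higman's lemma the subword order on words over a finite alphabet is a well-quasi-order, so
every language `L` has a finite subset `B` such that each word of `L` contains a word of `B`.
Hence `↑L = ↑B` is a finite union of languages `↑{w}`, and `↑{w}` is recognised by the automaton
that reads its input while greedily matching the letters of `w`.
-/

open List

namespace List

variable {α : Type*} [DecidableEq α]

def dropMatchingHead : List α → α → List α
  | [], _ => []
  | b :: r, a => if b = a then r else b :: r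

theorem dropMatchingHead_suffix (r : List α) (a : α) : r.dropMatchingHead a <:+ r := by
  cases r with
  | nil => exact suffix_refl _
  | cons b r => by_cases h : b = a <;> simp [dropMatchingHead, h]

theorem foldl_dropMatchingHead_eq_nil_iff (r v : List α) :
    v.foldl dropMatchingHead r = [] ↔ r <+ v := by
  induction v generalizing r with
  | nil => simp
  | cons a v ih =>
    rw [foldl_cons, ih]
    cases r with
    | nil => simp [dropMatchingHead]
    | cons b r =>
      by_cases h : b = a
      · simp [dropMatchingHead, h]
      · simpa [dropMatchingHead, h] using ⟨.cons a, .of_cons_of_ne h⟩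

theorem wellQuasiOrdered_sublist {β : Type*} [Finite β] :
    WellQuasiOrdered (fun u v : List β => u <+ v) := by
  have higman := Set.PartiallyWellOrderedOn.partiallyWellOrderedOn_sublistForall₂ (· = ·)
    (Set.finite_univ (α := β)).partiallyWellOrderedOn
  simp only [Set.mem_univ, implies_true, Set.ofPred_true,
    Set.partiallyWellOrderedOn_univ_iff] at higman
  refine fun f => (higman f).imp fun m => Exists.imp fun n => And.imp_right fun h => ?_
  obtain ⟨l, hl, hsub⟩ := sublistForall₂_iff.1 h
  rw [forall₂_eq_eq_eq] at hl
  exact hl ▸ hsub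

end List

section SublistDFA

variable {α : Type*} [DecidableEq α]

/-- The state is the suffix of `w` that remains to be matched. -/
def sublistDFA (w : List α) : DFA α {r // r ∈ w.tails} where
  step r a := ⟨r.1.dropMatchingHead a,
    (mem_tails _ _).2 ((r.1.dropMatchingHead_suffix a).trans ((mem_tails _ _).1 r.2))⟩
  start := ⟨w, (mem_tails _ _).2 (suffix_refl w)⟩
  accept := {r | r.1 = []}

theorem sublistDFA_evalFrom_val (w : List α) (r : {r // r ∈ w.tails}) (v : List α) :
    ((sublistDFA w).evalFrom r v).1 = v.foldl dropMatchingHead r.1 := by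
  induction v generalizing r with
  | nil => rfl
  | cons a v ih => exact ih _

theorem sublistDFA_accepts (w : List α) : (sublistDFA w).accepts = {v | w <+ v} := by
  ext v
  change ((sublistDFA w).evalFrom _ v).1 = [] ↔ w <+ v
  rw [sublistDFA_evalFrom_val, foldl_dropMatchingHead_eq_nil_iff]
  rfl

end SublistDFA

namespace Language

variable {α : Type*}

theorem isRegular_setOf_sublist (w : List α) : IsRegular {v | w <+ v} := by
  classical
  exact isRegular_iff.2 ⟨_, inferInstance, sublistDFA w, sublistDFA_accepts w⟩

theorem isRegular_bot : (⊥ : Language α).IsRegular :=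
  ⟨Unit, inferInstance, ⟨fun _ _ => (), (), ∅⟩, rfl⟩

theorem isRegular_biSup {ι : Type*} {t : Set ι} (ht : t.Finite) {L : ι → Language α}
    (hL : ∀ i ∈ t, (L i).IsRegular) : IsRegular (⨆ i ∈ t, L i) := by
  induction t, ht using Set.Finite.induction_on with
  | empty => simpa using isRegular_bot
  | insert _ _ ih =>
    rw [iSup_insert]
    exact (hL _ (Set.mem_insert _ _)).add (ih fun i hi => hL i (Set.mem_insert_of_mem _ hi))

end Language

/-- If there were no such `t`, picking successively elements of `s` that lie above none of the
earlier picks would produce a bad sequence. -/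
theorem WellQuasiOrdered.exists_finite_basis {α : Type*} {r : α → α → Prop}
    (hr : WellQuasiOrdered r) (s : Set α) :
    ∃ t ⊆ s, t.Finite ∧ ∀ a ∈ s, ∃ b ∈ t, r b a := by
  classical
  by_contra! h
  have hnext : ∀ t : Finset α, ∃ a ∈ s, ∀ b ∈ t, b ∈ s → ¬ r b a := fun t =>
    (h (↑t ∩ s) Set.inter_subset_right (t.finite_toSet.inter_of_left s)).imp
      fun a ⟨ha, hbad⟩ => ⟨ha, fun b hb hbs => hbad b ⟨hb, hbs⟩⟩
  choose next hnext_mem hnext_bad using hnext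
  let picked : ℕ → Finset α := fun n => n.rec ∅ fun _ t => insert (next t) t
  have hpicked_mono : Monotone picked :=
    monotone_nat_of_le_succ fun _ => Finset.subset_insert _ _
  obtain ⟨m, n, hmn, hr_mn⟩ := hr fun n => next (picked n)
  exact hnext_bad (picked n) _ (hpicked_mono hmn (Finset.mem_insert_self _ _)) (hnext_mem _) hr_mn

/-- For every language `L` over a finite alphabet `A`, the upward closure
of `L` (the set of words having a subword in `L`) is regular, i.e. recognized by a DFA
with finitely many states. -/
theorem upward_closure_regular {A : Type} [Fintype A] (L : Language A) :
    ∃ (n : ℕ) (M : DFA A (Fin n)),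
      M.accepts = {v : List A | ∃ u ∈ L, u.Sublist v} := by
  obtain ⟨B, hBL, hB, hLB⟩ := wellQuasiOrdered_sublist.exists_finite_basis L
  have hup : ⨆ w ∈ B, ({v | w <+ v} : Language A) = {v | ∃ u ∈ L, u <+ v} := by
    ext v
    simp only [Set.iSup_eq_iUnion, Set.mem_iUnion, Set.mem_ofPred_eq, exists_prop]
    constructor
    · rintro ⟨w, hwB, hwv⟩
      exact ⟨w, hBL hwB, hwv⟩
    · rintro ⟨u, huL, huv⟩
      obtain ⟨w, hwB, hwu⟩ := hLB u huL
      exact ⟨w, hwB, hwu.trans huv⟩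
  obtain ⟨σ, _, M, hM⟩ :=
    hup ▸ Language.isRegular_biSup hB fun w _ => Language.isRegular_setOf_sublist w
  exact ⟨_, M.reindex (Fintype.equivFin σ), by rw [DFA.accepts_reindex, hM]⟩
end

section
/- The subword (subsequence) relation on finite words over a finite alphabet is a well-quasi-order: every infinite sequence of words contains two indices i < j with the i-th word a subword of the j-th word. -/
theorem WellQuasiOrdered.sublistForall₂ {α : Type*} {r : α → α → Prop} [IsPreorder α r]
    (h : WellQuasiOrdered r) : WellQuasiOrdered (List.SublistForall₂ r) := by
  have higman := Set.PartiallyWellOrderedOn.partiallyWellOrderedOn_sublistForall₂ r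
    (Set.partiallyWellOrderedOn_univ_iff.mpr h)
  simpa only [Set.mem_univ, implies_true, Set.ofPred_true,
    Set.partiallyWellOrderedOn_univ_iff] using higman

theorem List.sublistForall₂_eq_iff {α : Type*} {l₁ l₂ : List α} :
    SublistForall₂ (· = ·) l₁ l₂ ↔ l₁.Sublist l₂ := by
  simp only [sublistForall₂_iff, forall₂_eq_eq_eq, exists_eq_left']

theorem List.wellQuasiOrdered_sublist_s2 (α : Type*) [Finite α] :
    WellQuasiOrdered (fun l₁ l₂ : List α => l₁.Sublist l₂) := by
  intro f
  obtain ⟨i, j, hij, hsub⟩ := (Finite.wellQuasiOrdered (α := α) (· = ·)).sublistForall₂ f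
  exact ⟨i, j, hij, sublistForall₂_eq_iff.mp hsub⟩

/-- Higman's lemma: the subword (subsequence) relation on finite words over
a finite alphabet is a well-quasi-order. -/
theorem subword_wqo {A : Type} [Fintype A] (f : ℕ → List A) :
    ∃ i j : ℕ, i < j ∧ (f i).Sublist (f j) :=
  List.wellQuasiOrdered_sublist_s2 A f
end
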